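/- Let Γ = (G, σ) be a balanced signed graph on n vertices. Given integers 1 ≤ k₁ < k₂ < n, let F_{k₁}(Γ) and F_{k₂}(Γ) be its k₁-token and k₂-token signed graphs, with Laplacian matrices L_{k₁} and L_{k₂}, and let B⁺ be the (n; k₁, k₂)-binomial matrix. Then there exist diagonal ±1 matrices S_{k₁} (of size C(n,k₁) × C(n,k₁)) and S_{k₂} (of size C(n,k₂) × C(n,k₂)) such that the signed binomial matrix B = S_{k₂} B⁺ S_{k₁} satisfies B L_{k₁} = L_{k₂} B. -/

import Mathlib

open scoped Classical

/-- A signed graph: a simple graph together with a signature assigning a sign `±1`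
(an element of `ℤˣ`) to each pair of vertices (only the values on edges are relevant). -/
structure SignedGraph (V : Type*) where
  G : SimpleGraph V
  sign : V → V → ℤˣ
  sign_symm : ∀ u v, sign u v = sign v u

namespace SignedGraph

variable {V W : Type*}

/-- The sign function, as a function on unordered pairs. -/
def esign (Γ : SignedGraph V) : Sym2 V → ℤˣ :=
  Sym2.lift ⟨Γ.sign, Γ.sign_symm⟩

/-- The sign of a walk: the product of the signs of its edges. -/
def walkSign (Γ : SignedGraph V) {u v : V} (p : Γ.G.Walk u v) : ℤˣ :=
  (p.edges.map Γ.esign).prod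

/-- A signed graph is balanced if every cycle is positive. -/
def Balanced (Γ : SignedGraph V) : Prop :=
  ∀ ⦃u : V⦄ (p : Γ.G.Walk u u), p.IsCycle → Γ.walkSign p = 1

/-- Switching at a vertex subset `U`: reverse the sign of every edge with exactly one
endpoint in `U`. -/
noncomputable def switch (Γ : SignedGraph V) (U : Set V) : SignedGraph V where
  G := Γ.G
  sign u v := (if u ∈ U then (-1 : ℤˣ) else 1) * (if v ∈ U then (-1 : ℤˣ) else 1) * Γ.sign u v
  sign_symm u v := by
    try dsimp only
    rw [Γ.sign_symm u v, mul_comm (if u ∈ U then (-1 : ℤˣ) else 1) (if v ∈ U then (-1 : ℤˣ) else 1)]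

/-- Two signed graphs on the same vertex set are "the same signed graph" when they have the
same underlying graph and the same signature on every edge. -/
def SEq (Γ Γ' : SignedGraph V) : Prop :=
  Γ.G = Γ'.G ∧ ∀ u v, Γ.G.Adj u v → Γ.sign u v = Γ'.sign u v

/-- Switching equivalence of two signed graphs on the same vertex set. -/
def SwitchEquiv (Γ Γ' : SignedGraph V) : Prop :=
  ∃ U : Set V, (Γ.switch U).SEq Γ'

/-- A sign-preserving isomorphism of signed graphs. -/
structure Iso (Γ : SignedGraph V) (Γ' : SignedGraph W) where
  toEquiv : V ≃ W
  adj_iff : ∀ u v, Γ.G.Adj u v ↔ Γ'.G.Adj (toEquiv u) (toEquiv v)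
  sign_eq : ∀ u v, Γ.G.Adj u v → Γ.sign u v = Γ'.sign (toEquiv u) (toEquiv v)

/-- Switching isomorphism: `Γ'` is isomorphic to a switching of `Γ`. -/
def SwitchIso (Γ : SignedGraph V) (Γ' : SignedGraph W) : Prop :=
  ∃ U : Set V, Nonempty ((Γ.switch U).Iso Γ')

/-- The negation of a signed graph: all edge signs reversed. -/
def neg (Γ : SignedGraph V) : SignedGraph V where
  G := Γ.G
  sign u v := -Γ.sign u v
  sign_symm u v := by (try dsimp only); rw [Γ.sign_symm]

variable [DecidableEq V]

/-- The underlying graph of the `k`-token graph: vertices are the `k`-subsets of `V`,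
with `A ~ B` when `A Δ B = {a, b}`, `a ∈ A`, `b ∈ B` and `a ~ b` in `G`. -/
def tokenAdj (G : SimpleGraph V) (k : ℕ) : SimpleGraph {A : Finset V // A.card = k} where
  Adj A B := ∃ a b, a ∈ A.1 ∧ b ∈ B.1 ∧ G.Adj a b ∧ symmDiff A.1 B.1 = {a, b}
  symm := by
    refine ⟨?_⟩
    rintro A B ⟨a, b, ha, hb, hab, hs⟩
    exact ⟨b, a, hb, ha, hab.symm, by rw [symmDiff_comm, hs, Finset.pair_comm]⟩
  loopless := by
    refine ⟨?_⟩
    rintro A ⟨a, b, ha, hb, hab, hs⟩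
    rw [symmDiff_self] at hs
    have h : a ∈ ({a, b} : Finset V) := Finset.mem_insert_self a {b}
    rw [← hs] at h
    simp at h

/-- The `k`-token signed graph: the edge obtained by moving a token along `ab`
carries the sign of `ab`. -/
def token (Γ : SignedGraph V) (k : ℕ) : SignedGraph {A : Finset V // A.card = k} where
  G := tokenAdj Γ.G k
  sign A B := ∏ a ∈ A.1 \ B.1, ∏ b ∈ B.1 \ A.1, Γ.sign a b
  sign_symm A B := by
    try dsimp only
    rw [Finset.prod_comm]
    exact Finset.prod_congr rfl fun b _ => Finset.prod_congr rfl fun a _ => Γ.sign_symm a b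

/-- The signed adjacency matrix (over `ℝ`). -/
noncomputable def adjMatrix (Γ : SignedGraph V) [Fintype V] : Matrix V V ℝ :=
  Matrix.of fun u v => if Γ.G.Adj u v then ((Γ.sign u v : ℤ) : ℝ) else 0

/-- The signed Laplacian matrix `L = D - A` (over `ℝ`). -/
noncomputable def lapMatrix (Γ : SignedGraph V) [Fintype V] : Matrix V V ℝ :=
  Matrix.diagonal (fun v => (Γ.G.degree v : ℝ)) - Γ.adjMatrix

/-- The quantity `ℓ_m(Γ)`. -/
noncomputable def ellm (Γ : SignedGraph V) [Fintype V] (m : ℕ) : ℝ :=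
  (∑ r ∈ Finset.range (m + 1),
      ((Γ.G.adjMatrix ℝ ^ r).trace - (Γ.adjMatrix ^ r).trace)) /
  (∑ r ∈ Finset.range (m + 1),
      ((Γ.G.adjMatrix ℝ ^ r).trace + |(Γ.adjMatrix ^ r).trace|))

/-- The unbalance level `ℓ(Γ) = max {ℓ_{n-1}(Γ), ℓ_n(Γ)}`. -/
noncomputable def unbalanceLevel (Γ : SignedGraph V) [Fintype V] : ℝ :=
  max (Γ.ellm (Fintype.card V - 1)) (Γ.ellm (Fintype.card V))

/-- The frustration index: the minimum number of negative edges whose deletion yields a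
balanced signed graph. -/
noncomputable def frustrationIndex (Γ : SignedGraph V) : ℕ :=
  sInf {m : ℕ | ∃ F : Finset (Sym2 V), F.card = m ∧ ↑F ⊆ Γ.G.edgeSet ∧
    (∀ e ∈ F, Γ.esign e = -1) ∧
    Balanced ⟨Γ.G.deleteEdges ↑F, Γ.sign, Γ.sign_symm⟩}

/-- The signed complement of a balanced signed graph, with respect to a switching function
`s` witnessing balance (`A_σ = S A S`): the signed graph on the complement graph with
adjacency matrix `S Ā S`, i.e. with sign `s u * s v` on each complement edge. -/
def scompl (Γ : SignedGraph V) (s : V → ℤˣ) : SignedGraph V where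
  G := Γ.Gᶜ
  sign u v := s u * s v
  sign_symm u v := mul_comm _ _

/-- The real diagonal `±1` matrix associated with `s : V → ℤˣ`. -/
noncomputable def diagS [Fintype V] (s : V → ℤˣ) : Matrix V V ℝ :=
  Matrix.diagonal fun v => ((s v : ℤ) : ℝ)

end SignedGraph

/-- The all-positive signed complete graph on `V`. -/
def allPos (V : Type*) : SignedGraph V := ⟨⊤, fun _ _ => 1, fun _ _ => rfl⟩

/-- The `(n; 1, k)`-binomial matrix. -/
noncomputable def binomB (V : Type*) [Fintype V] [DecidableEq V] (k : ℕ) :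
    Matrix {A : Finset V // A.card = k} V ℝ :=
  Matrix.of fun A v => if v ∈ A.1 then 1 else 0

/-- The `(n; k₁, k₂)`-binomial matrix. -/
noncomputable def binomB2 (V : Type*) [Fintype V] [DecidableEq V] (k₁ k₂ : ℕ) :
    Matrix {A : Finset V // A.card = k₂} {A : Finset V // A.card = k₁} ℝ :=
  Matrix.of fun A X => if X.1 ⊆ A.1 then 1 else 0

/-!
By Harary's theorem a balanced signature has the form `σ(uv) = s(u) s(v)` with
`s : V → {±1}`. The `k`-token signature is then `σ(A, B) = S(A) S(B)` with
`S(A) = ∏_{v ∈ A} s(v)`, so `L_k = S_k L⁺_k S_k`, where `L⁺_k` is the Laplacian of the unsigned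
token graph. Moreover `L⁺_k = ∑_{ab ∈ E(G)} (I - P_{(a b)})`, where `P_{(a b)}` is the
permutation matrix of the transposition `(a b)` acting on `k`-subsets: off the diagonal,
`(a b)` moves `A` to `B ≠ A` exactly when `A Δ B = {a, b}`, and both sides have zero row sums.
Containment of subsets is invariant under permutations of `V`, so `B⁺` intertwines the
matrices `P_{(a b)}`; hence `B⁺ L⁺_{k₁} = L⁺_{k₂} B⁺`, and conjugating by the involutions
`S_{k₁}`, `S_{k₂}` gives the signed identity.
-/

namespace Int

lemma cast_units_mul_self {R : Type*} [Ring R] (u : ℤˣ) :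
    ((u : ℤ) : R) * ((u : ℤ) : R) = 1 := by
  rw [← Int.cast_mul, Int.units_coe_mul_self, Int.cast_one]

lemma cast_units_eq_one_or {R : Type*} [Ring R] (u : ℤˣ) :
    ((u : ℤ) : R) = 1 ∨ ((u : ℤ) : R) = -1 := by
  rcases Int.units_eq_one_or u with rfl | rfl <;> simp

end Int

namespace Finset

variable {α : Type*} [DecidableEq α]

lemma prod_mul_prod_eq_prod_sdiff_mul_prod_sdiff {M : Type*} [CommMonoid M] {f : α → M}
    (hf : ∀ i, f i * f i = 1) (s t : Finset α) :
    (∏ i ∈ s, f i) * ∏ i ∈ t, f i = (∏ i ∈ s \ t, f i) * ∏ i ∈ t \ s, f i := by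
  have hinter : (∏ i ∈ s ∩ t, f i) * ∏ i ∈ s ∩ t, f i = 1 := by
    rw [← prod_mul_distrib, prod_eq_one fun i _ => hf i]
  rw [← prod_inter_mul_prod_sdiff s t, ← prod_inter_mul_prod_sdiff t s, inter_comm t s,
    mul_mul_mul_comm, hinter, one_mul]

variable {s t : Finset α} {a b c d : α}

lemma map_swap_eq_self (h : a ∈ s ↔ b ∈ s) : s.map (Equiv.swap a b).toEmbedding = s := by
  ext z
  rw [mem_map_equiv, Equiv.symm_swap, Equiv.swap_apply_def]
  split_ifs <;> simp_all

lemma mem_and_notMem_of_map_swap_ne (h : s.map (Equiv.swap a b).toEmbedding ≠ s) :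
    (a ∈ s ∧ b ∉ s) ∨ (b ∈ s ∧ a ∉ s) := by
  by_contra hab
  exact h (map_swap_eq_self (by tauto))

lemma sdiff_map_swap (ha : a ∈ s) (hb : b ∉ s) :
    s \ s.map (Equiv.swap a b).toEmbedding = {a} ∧
      s.map (Equiv.swap a b).toEmbedding \ s = {b} := by
  constructor <;>
  · ext z
    rw [mem_sdiff, mem_map_equiv, Equiv.symm_swap, Equiv.swap_apply_def, mem_singleton]
    split_ifs <;> grind

lemma map_swap_inj (ha : a ∈ s) (hb : b ∉ s) (hc : c ∈ s) (hd : d ∉ s) :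
    s.map (Equiv.swap a b).toEmbedding = s.map (Equiv.swap c d).toEmbedding ↔
      a = c ∧ b = d := by
  refine ⟨fun h => ?_, by rintro ⟨rfl, rfl⟩; rfl⟩
  have hab := sdiff_map_swap ha hb
  have hcd := sdiff_map_swap hc hd
  rw [h, hcd.1, hcd.2, singleton_inj, singleton_inj] at hab
  exact ⟨hab.1.symm, hab.2.symm⟩

lemma eq_map_swap_of_symmDiff_eq_pair (ha : a ∈ s) (hb : b ∈ t) (h : symmDiff s t = {a, b}) :
    t = s.map (Equiv.swap a b).toEmbedding := by
  have hmem (z : α) := Finset.ext_iff.mp h z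
  simp only [mem_symmDiff, mem_insert, mem_singleton] at hmem
  ext z
  rw [mem_map_equiv, Equiv.symm_swap, Equiv.swap_apply_def]
  split_ifs <;> grind

end Finset

namespace Matrix

variable {m n R : Type*} [Fintype n] [DecidableEq n]

lemma eq_of_mulVec_const_eq_of_offDiag_eq [NonAssocRing R] {M N : Matrix n n R}
    (hrow : M *ᵥ (fun _ => 1) = N *ᵥ (fun _ => 1)) (hoff : ∀ i j, i ≠ j → M i j = N i j) :
    M = N := by
  ext i j
  obtain rfl | hij := eq_or_ne i j
  · have hi := congrFun hrow i
    simp only [mulVec, dotProduct, mul_one] at hi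
    rw [← Finset.add_sum_erase _ _ (Finset.mem_univ i),
      ← Finset.add_sum_erase _ _ (Finset.mem_univ i),
      Finset.sum_congr rfl fun j hj => hoff i j (Finset.ne_of_mem_erase hj).symm] at hi
    exact add_right_cancel hi
  · exact hoff i j hij

lemma mul_permMatrix_eq_permMatrix_mul [Fintype m] [DecidableEq m] [NonAssocSemiring R]
    {M : Matrix m n R} {σ : Equiv.Perm m} {τ : Equiv.Perm n} (hM : M.submatrix σ τ = M) :
    M * τ.permMatrix R = σ.permMatrix R * M := by
  rw [PEquiv.mul_toMatrix_toPEquiv, PEquiv.toMatrix_toPEquiv_mul]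
  conv_lhs => rw [← hM]
  ext i j
  simp

lemma mul_conj_eq_conj_mul_of_mul_eq [Fintype m] [DecidableEq m] [Semiring R] {S : Matrix m m R}
    {T : Matrix n n R} {B : Matrix m n R} {L : Matrix n n R} {L' : Matrix m m R}
    (hS : S * S = 1) (hT : T * T = 1) (h : B * L = L' * B) :
    S * B * T * (T * L * T) = S * L' * S * (S * B * T) :=
  calc S * B * T * (T * L * T) = S * (B * (T * T) * L) * T := by simp only [Matrix.mul_assoc]
    _ = S * (L' * (S * S) * B) * T := by rw [hT, hS, Matrix.mul_one, Matrix.mul_one, h]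
    _ = S * L' * S * (S * B * T) := by simp only [Matrix.mul_assoc]

end Matrix

namespace SimpleGraph

open Finset

variable {W ι R : Type*} [Fintype W] [DecidableEq W] [CommRing R]

lemma lapMatrix_eq_sum_one_sub_permMatrix (H : SimpleGraph W) [DecidableRel H.Adj]
    (s : Finset ι) (π : ι → Equiv.Perm W)
    (hπ : ∀ x y, x ≠ y → #{i ∈ s | π i x = y} = if H.Adj x y then 1 else 0) :
    H.lapMatrix R = ∑ i ∈ s, (1 - (π i).permMatrix R) := by
  apply Matrix.eq_of_mulVec_const_eq_of_offDiag_eq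
  · rw [lapMatrix_mulVec_const_eq_zero, Matrix.sum_mulVec]
    refine (Finset.sum_eq_zero fun i _ => ?_).symm
    rw [Matrix.sub_mulVec, Matrix.permMatrix_mulVec, Matrix.one_mulVec]
    exact sub_self _
  · intro x y hxy
    simp [Matrix.sum_apply, lapMatrix, degMatrix, hxy, hπ x y hxy, Finset.sum_boole]

end SimpleGraph

namespace SignedGraph

open Finset SimpleGraph

section Balance

open Walk

variable {V : Type*} {Γ : SignedGraph V}

@[simp]
lemma walkSign_nil {u : V} : Γ.walkSign (nil : Γ.G.Walk u u) = 1 := rfl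

@[simp]
lemma walkSign_cons {u v w : V} (h : Γ.G.Adj u v) (p : Γ.G.Walk v w) :
    Γ.walkSign (cons h p) = Γ.sign u v * Γ.walkSign p := by
  simp [walkSign, esign]

@[simp]
lemma walkSign_append {u v w : V} (p : Γ.G.Walk u v) (q : Γ.G.Walk v w) :
    Γ.walkSign (p.append q) = Γ.walkSign p * Γ.walkSign q := by
  simp [walkSign]

@[simp]
lemma walkSign_reverse {u v : V} (p : Γ.G.Walk u v) : Γ.walkSign p.reverse = Γ.walkSign p := by
  simp [walkSign, List.prod_reverse]

@[simp]
lemma walkSign_copy {u v u' v' : V} (p : Γ.G.Walk u v) (hu : u = u') (hv : v = v') :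
    Γ.walkSign (p.copy hu hv) = Γ.walkSign p := by
  subst hu hv
  rfl

lemma Balanced.walkSign_cons_of_isPath (hbal : Γ.Balanced) {u v : V} (h : Γ.G.Adj u v)
    {q : Γ.G.Walk v u} (hq : q.IsPath) : Γ.walkSign (cons h q) = 1 := by
  by_cases he : s(v, u) ∈ q.edges
  · rw [hq.eq_adj_toWalk_of_mem_edges he]
    simp [Γ.sign_symm v u, Int.units_mul_self]
  · exact hbal _ (cons_isCycle_iff q h |>.mpr ⟨hq, by rwa [Sym2.eq_swap]⟩)

lemma Balanced.walkSign_bypass (hbal : Γ.Balanced) {u v : V} (p : Γ.G.Walk u v) :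
    Γ.walkSign p.bypass = Γ.walkSign p := by
  induction p with
  | nil => rfl
  | @cons u v w h p ih =>
    rw [bypass]
    split_ifs with hs
    · -- the detour cut out by `bypass`, closed up by `h`, is a positive closed path
      have hcycle := hbal.walkSign_cons_of_isPath h (p.bypass_isPath.takeUntil hs)
      have hsplit := congrArg Γ.walkSign (p.bypass.take_spec hs)
      rw [walkSign_append] at hsplit
      rw [walkSign_cons] at hcycle
      rw [walkSign_cons, ← ih, ← hsplit, ← mul_assoc, hcycle, one_mul]
    · rw [walkSign_cons, walkSign_cons, ih]

lemma Balanced.walkSign_eq_one (hbal : Γ.Balanced) {u : V} (p : Γ.G.Walk u u) :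
    Γ.walkSign p = 1 := by
  rw [← hbal.walkSign_bypass, (isPath_iff_nil.mp p.bypass_isPath).eq_nil, walkSign_nil]

/-- Harary's theorem. -/
lemma Balanced.exists_sign_eq_mul (hbal : Γ.Balanced) :
    ∃ s : V → ℤˣ, ∀ u v, Γ.G.Adj u v → Γ.sign u v = s u * s v := by
  have hreach (v : V) : Γ.G.Reachable (Γ.G.connectedComponentMk v).out v :=
    ConnectedComponent.exact (Γ.G.connectedComponentMk v).out_eq
  refine ⟨fun v => Γ.walkSign (hreach v).some, fun u v h => ?_⟩
  have hout : (Γ.G.connectedComponentMk u).out = (Γ.G.connectedComponentMk v).out := by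
    rw [ConnectedComponent.connectedComponentMk_eq_of_adj h]
  have hclosed := hbal.walkSign_eq_one
    (((hreach u).some.append (cons h (hreach v).some.reverse)).copy hout rfl)
  simp only [walkSign_copy, walkSign_append, walkSign_cons, walkSign_reverse] at hclosed
  set a := Γ.walkSign (hreach u).some
  set b := Γ.walkSign (hreach v).some
  calc Γ.sign u v = (a * a) * Γ.sign u v * (b * b) := by
        simp only [Int.units_mul_self, one_mul, mul_one]
    _ = a * (a * (Γ.sign u v * b)) * b := by ac_rfl
    _ = a * b := by rw [hclosed, mul_one]

end Balance

section Token

variable {V : Type*}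

def tokenPerm (σ : Equiv.Perm V) (k : ℕ) : Equiv.Perm {A : Finset V // A.card = k} :=
  σ.finsetCongr.subtypeEquiv fun A => by simp

@[simp]
lemma tokenPerm_apply_coe (σ : Equiv.Perm V) (k : ℕ) (A : {A : Finset V // A.card = k}) :
    (tokenPerm σ k A).1 = A.1.map σ.toEmbedding := rfl

variable [DecidableEq V]

def edgeSwap : Sym2 V → Equiv.Perm V := Sym2.lift ⟨Equiv.swap, Equiv.swap_comm⟩

@[simp]
lemma edgeSwap_mk (a b : V) : edgeSwap s(a, b) = Equiv.swap a b := rfl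

lemma tokenAdj_iff {G : SimpleGraph V} {k : ℕ} {P Q : {A : Finset V // A.card = k}} :
    (tokenAdj G k).Adj P Q ↔
      ∃ a b, G.Adj a b ∧ a ∈ P.1 ∧ b ∉ P.1 ∧
        Q.1 = P.1.map (Equiv.swap a b).toEmbedding := by
  constructor
  · rintro ⟨a, b, ha, hb, hab, hPQ⟩
    have hbP : b ∉ P.1 := by
      have hb' : b ∈ symmDiff P.1 Q.1 := by simp [hPQ]
      rw [mem_symmDiff] at hb'
      tauto
    exact ⟨a, b, hab, ha, hbP, eq_map_swap_of_symmDiff_eq_pair ha hb hPQ⟩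
  · rintro ⟨a, b, hab, ha, hb, hQ⟩
    have hsdiff := sdiff_map_swap ha hb
    rw [← hQ] at hsdiff
    refine ⟨a, b, ha, (mem_sdiff.mp (hsdiff.2 ▸ mem_singleton_self b)).1, hab, ?_⟩
    rw [symmDiff_def, hsdiff.1, hsdiff.2, sup_eq_union, insert_eq]

lemma card_filter_tokenPerm_edgeSwap_eq (G : SimpleGraph V) [Fintype G.edgeSet] {k : ℕ}
    {X Y : {A : Finset V // A.card = k}} (hXY : X ≠ Y) :
    #{e ∈ G.edgeFinset | tokenPerm (edgeSwap e) k X = Y} =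
      if (tokenAdj G k).Adj X Y then 1 else 0 := by
  have hswap (c d : V) : tokenPerm (edgeSwap s(c, d)) k X = Y ↔
      X.1.map (Equiv.swap c d).toEmbedding = Y.1 := by
    rw [Subtype.ext_iff, edgeSwap_mk, tokenPerm_apply_coe]
  have hmem (c d : V) (hcd : X.1.map (Equiv.swap c d).toEmbedding = Y.1) :
      (c ∈ X.1 ∧ d ∉ X.1) ∨ (d ∈ X.1 ∧ c ∉ X.1) :=
    mem_and_notMem_of_map_swap_ne (hcd ▸ fun h => hXY (Subtype.ext h.symm))
  split_ifs with hadj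
  · obtain ⟨a, b, hab, ha, hb, hY⟩ := tokenAdj_iff.mp hadj
    rw [card_eq_one]
    refine ⟨s(a, b), ext fun e => ?_⟩
    induction e using Sym2.ind with | _ c d => ?_
    simp only [mem_filter, mem_edgeFinset, mem_edgeSet, hswap, mem_singleton, Sym2.eq_iff, hY]
    constructor
    · rintro ⟨-, hcd⟩
      rcases hmem c d (hcd.trans hY.symm) with ⟨hc, hd⟩ | ⟨hd, hc⟩
      · exact .inl ((map_swap_inj hc hd ha hb).mp hcd)
      · rw [Equiv.swap_comm] at hcd
        exact .inr ((map_swap_inj hd hc ha hb).mp hcd).symm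
    · rintro (⟨rfl, rfl⟩ | ⟨rfl, rfl⟩)
      · exact ⟨hab, rfl⟩
      · exact ⟨hab.symm, by rw [Equiv.swap_comm]⟩
  · rw [card_eq_zero, filter_eq_empty_iff]
    intro e he hXe
    induction e using Sym2.ind with | _ c d => ?_
    rw [mem_edgeFinset, mem_edgeSet] at he
    rw [hswap] at hXe
    refine hadj (tokenAdj_iff.mpr ?_)
    rcases hmem c d hXe with ⟨hc, hd⟩ | ⟨hd, hc⟩
    · exact ⟨c, d, he, hc, hd, hXe.symm⟩
    · exact ⟨d, c, he.symm, hd, hc, by rw [← hXe, Equiv.swap_comm]⟩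

lemma token_sign_eq_prod_mul_prod {Γ : SignedGraph V} {s : V → ℤˣ}
    (hs : ∀ u v, Γ.G.Adj u v → Γ.sign u v = s u * s v) {k : ℕ}
    {P Q : {A : Finset V // A.card = k}} (hPQ : (tokenAdj Γ.G k).Adj P Q) :
    (Γ.token k).sign P Q = (∏ v ∈ P.1, s v) * ∏ v ∈ Q.1, s v := by
  obtain ⟨a, b, hab, ha, hb, hQ⟩ := tokenAdj_iff.mp hPQ
  obtain ⟨hPQ, hQP⟩ := sdiff_map_swap ha hb
  rw [← hQ] at hPQ hQP
  rw [prod_mul_prod_eq_prod_sdiff_mul_prod_sdiff (fun v => Int.units_mul_self (s v)), hPQ, hQP,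
    prod_singleton, prod_singleton, ← hs a b hab]
  simp [token, hPQ, hQP]

variable [Fintype V]

lemma lapMatrix_tokenAdj_eq_sum {R : Type*} [CommRing R] (G : SimpleGraph V) [Fintype G.edgeSet]
    (k : ℕ) :
    (tokenAdj G k).lapMatrix R =
      ∑ e ∈ G.edgeFinset, (1 - (tokenPerm (edgeSwap e) k).permMatrix R) :=
  lapMatrix_eq_sum_one_sub_permMatrix _ _ _ fun _ _ hXY => card_filter_tokenPerm_edgeSwap_eq G hXY

lemma binomB2_submatrix_tokenPerm (σ : Equiv.Perm V) (k₁ k₂ : ℕ) :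
    (binomB2 V k₁ k₂).submatrix (tokenPerm σ k₂) (tokenPerm σ k₁) =
      binomB2 V k₁ k₂ := by
  ext A X
  simp [binomB2]

lemma binomB2_mul_lapMatrix_tokenAdj (G : SimpleGraph V) (k₁ k₂ : ℕ) :
    binomB2 V k₁ k₂ * (tokenAdj G k₁).lapMatrix ℝ =
      (tokenAdj G k₂).lapMatrix ℝ * binomB2 V k₁ k₂ := by
  rw [lapMatrix_tokenAdj_eq_sum, lapMatrix_tokenAdj_eq_sum, Matrix.mul_sum, Matrix.sum_mul]
  refine sum_congr rfl fun e _ => ?_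
  rw [Matrix.mul_sub, Matrix.sub_mul, Matrix.mul_one, Matrix.one_mul,
    Matrix.mul_permMatrix_eq_permMatrix_mul (binomB2_submatrix_tokenPerm _ _ _)]

end Token

variable {V : Type*} [DecidableEq V] [Fintype V]

lemma diagS_mul_self (t : V → ℤˣ) : diagS t * diagS t = 1 := by
  simp only [diagS, Matrix.diagonal_mul_diagonal, Int.cast_units_mul_self, Matrix.diagonal_one]

lemma lapMatrix_eq_diagS_mul_mul {Γ : SignedGraph V} {t : V → ℤˣ}
    (ht : ∀ u v, Γ.G.Adj u v → Γ.sign u v = t u * t v) :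
    Γ.lapMatrix = diagS t * Γ.G.lapMatrix ℝ * diagS t := by
  ext u v
  simp only [diagS, Matrix.mul_diagonal, Matrix.diagonal_mul, lapMatrix, adjMatrix,
    SimpleGraph.lapMatrix, degMatrix, Matrix.sub_apply, Matrix.diagonal_apply,
    Matrix.of_apply, adjMatrix_apply]
  obtain rfl | huv := eq_or_ne u v
  · simp [mul_right_comm _ _ ((t u : ℤ) : ℝ), Int.cast_units_mul_self]
  · by_cases hadj : Γ.G.Adj u v
    · simp [huv, hadj, ht u v hadj]
    · simp [huv, hadj]

lemma lapMatrix_token_eq_diagS_mul_mul {Γ : SignedGraph V} {s : V → ℤˣ}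
    (hs : ∀ u v, Γ.G.Adj u v → Γ.sign u v = s u * s v) (k : ℕ) :
    (Γ.token k).lapMatrix =
      diagS (fun A : {A : Finset V // A.card = k} => ∏ v ∈ A.1, s v) *
        (tokenAdj Γ.G k).lapMatrix ℝ * diagS (fun A => ∏ v ∈ A.1, s v) :=
  lapMatrix_eq_diagS_mul_mul fun _ _ hPQ => token_sign_eq_prod_mul_prod hs hPQ

end SignedGraph

theorem signed_binomial_commutes_general_general {V : Type*} [Fintype V] [DecidableEq V]
    (k₁ k₂ : ℕ)
    (Γ : SignedGraph V) (hbal : Γ.Balanced) :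
    ∃ (s₁ : {A : Finset V // A.card = k₁} → ℝ) (s₂ : {A : Finset V // A.card = k₂} → ℝ),
      (∀ A, s₁ A = 1 ∨ s₁ A = -1) ∧ (∀ A, s₂ A = 1 ∨ s₂ A = -1) ∧
      Matrix.diagonal s₂ * binomB2 V k₁ k₂ * Matrix.diagonal s₁ * (Γ.token k₁).lapMatrix
        = (Γ.token k₂).lapMatrix *
            (Matrix.diagonal s₂ * binomB2 V k₁ k₂ * Matrix.diagonal s₁) := by
  obtain ⟨s, hs⟩ := hbal.exists_sign_eq_mul
  refine ⟨fun A => ((∏ v ∈ A.1, s v : ℤˣ) : ℤ), fun A => ((∏ v ∈ A.1, s v : ℤˣ) : ℤ),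
    fun _ => Int.cast_units_eq_one_or _, fun _ => Int.cast_units_eq_one_or _, ?_⟩
  change SignedGraph.diagS _ * _ * SignedGraph.diagS _ * _ =
    _ * (SignedGraph.diagS _ * _ * SignedGraph.diagS _)
  rw [SignedGraph.lapMatrix_token_eq_diagS_mul_mul hs,
    SignedGraph.lapMatrix_token_eq_diagS_mul_mul hs]
  exact Matrix.mul_conj_eq_conj_mul_of_mul_eq (SignedGraph.diagS_mul_self _)
    (SignedGraph.diagS_mul_self _) (SignedGraph.binomB2_mul_lapMatrix_tokenAdj _ _ _)

/-- for a balanced signed graph and `1 ≤ k₁ < k₂ < n` there is a signed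
binomial matrix `B = S_{k₂} B⁺ S_{k₁}` with `B L_{k₁} = L_{k₂} B`. -/
theorem signed_binomial_commutes_general {V : Type*} [Fintype V] [DecidableEq V]
    (n k₁ k₂ : ℕ) (hn : Fintype.card V = n) (hk1 : 1 ≤ k₁) (hk12 : k₁ < k₂) (hk2 : k₂ < n)
    (Γ : SignedGraph V) (hbal : Γ.Balanced) :
    ∃ (s₁ : {A : Finset V // A.card = k₁} → ℝ) (s₂ : {A : Finset V // A.card = k₂} → ℝ),
      (∀ A, s₁ A = 1 ∨ s₁ A = -1) ∧ (∀ A, s₂ A = 1 ∨ s₂ A = -1) ∧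
      Matrix.diagonal s₂ * binomB2 V k₁ k₂ * Matrix.diagonal s₁ * (Γ.token k₁).lapMatrix
        = (Γ.token k₂).lapMatrix *
            (Matrix.diagonal s₂ * binomB2 V k₁ k₂ * Matrix.diagonal s₁) :=
  signed_binomial_commutes_general_general k₁ k₂ Γ hbal
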